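/- (Wald/CACE identification.) Let A be a binary instrument with P(A=1) = p ∈ (0,1), independent of the pair of potential outcomes (Y₀, Y₁) and potential treatments (Z₀, Z₁), where Y = Y_{Z_A} with Z_A = A·Z₁ + (1-A)·Z₀, and exclusion holds so the observed outcome is Y = Z_A·Y₁ + (1-Z_A)·Y₀. Assume Z₁ ≥ Z₀ a.s. and E[Z₁ - Z₀] ≠ 0. Then E[Y | A=1] - E[Y | A=0] = E[(Y₁ - Y₀)(Z₁ - Z₀)], and hence (E[Y|A=1] - E[Y|A=0]) / (E[Z|A=1] - E[Z|A=0]) = E[Y₁ - Y₀ | Z₁ - Z₀ = 1]. -/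

import Mathlib

open MeasureTheory ProbabilityTheory

/-- Conditional expectation of `X` given an event `s`: `E[X | s] = (∫_s X dμ) / μ(s)`. -/
noncomputable def condExpEvent {Ω : Type*} [MeasurableSpace Ω] (μ : Measure Ω)
    (X : Ω → ℝ) (s : Set Ω) : ℝ :=
  (∫ ω in s, X ω ∂μ) / (μ s).toReal

/-!
Independence of `A` from `(Y₀, Y₁, Z₀, Z₁)` removes the conditioning on `A = a` from every
function of the potential variables, and on `{A = a}` the observed `Y` is the function
`Z_a Y₁ + (1 - Z_a) Y₀` of them. So the contrast of `Y` over the instrument is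
`E[Z₁ Y₁ + (1 - Z₁) Y₀] - E[Z₀ Y₁ + (1 - Z₀) Y₀] = E[(Y₁ - Y₀)(Z₁ - Z₀)]`, and that of `Z` is
`E[Z₁ - Z₀]`. Monotonicity makes `Z₁ - Z₀` the indicator of the compliers `{Z₁ - Z₀ = 1}`, so the
ratio is `E[(Y₁ - Y₀); compliers] / P(compliers)`.
-/

section

variable {Ω : Type*} [MeasurableSpace Ω] {μ : Measure Ω}

lemma ProbabilityTheory.IndepFun.setIntegral_preimage_eq_mul {β : Type*} [MeasurableSpace β]
    {A : Ω → β} {W : Ω → ℝ} (hAW : IndepFun A W μ) (hA : Measurable A)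
    (hW : AEStronglyMeasurable W μ) {t : Set β} (ht : MeasurableSet t) :
    ∫ ω in A ⁻¹' t, W ω ∂μ = μ.real (A ⁻¹' t) * ∫ ω, W ω ∂μ :=
  ((IndepFun_iff_Indep _ _ _).1 hAW).setIntegral_eq_mul (f := id) hA.comap_le hW.aemeasurable
    ⟨t, ht, rfl⟩ aestronglyMeasurable_id

lemma condExpEvent_preimage_eq_integral {β : Type*} [MeasurableSpace β] {A : Ω → β}
    {X W : Ω → ℝ} (hAW : IndepFun A W μ) (hA : Measurable A) (hW : AEStronglyMeasurable W μ)
    {t : Set β} (ht : MeasurableSet t) (hpos : μ.real (A ⁻¹' t) ≠ 0)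
    (hXW : Set.EqOn X W (A ⁻¹' t)) :
    condExpEvent μ X (A ⁻¹' t) = ∫ ω, W ω ∂μ := by
  rw [condExpEvent, setIntegral_congr_fun (hA ht) hXW,
    hAW.setIntegral_preimage_eq_mul hA hW ht]
  exact mul_div_cancel_left₀ _ hpos

lemma condExpEvent_eq_integral_mul_div_integral {D f : Ω → ℝ} (hD : Measurable D)
    (hD01 : ∀ᵐ ω ∂μ, D ω = 0 ∨ D ω = 1) :
    condExpEvent μ f {ω | D ω = 1} = (∫ ω, f ω * D ω ∂μ) / ∫ ω, D ω ∂μ := by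
  have hs : MeasurableSet {ω | D ω = 1} := hD (measurableSet_singleton 1)
  have hD_eq : D =ᵐ[μ] {ω | D ω = 1}.indicator 1 := by
    filter_upwards [hD01] with ω h
    rcases h with h | h <;> simp [h]
  have hfD_eq : (fun ω => f ω * D ω) =ᵐ[μ] {ω | D ω = 1}.indicator f := by
    filter_upwards [hD01] with ω h
    rcases h with h | h <;> simp [h]
  rw [condExpEvent, integral_congr_ae hD_eq, integral_indicator_one hs, integral_congr_ae hfD_eq,
    integral_indicator hs]
  rfl

lemma condExpEvent_sub_condExpEvent_eq_integral_sub {β γ : Type*} [MeasurableSpace β]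
    [MeasurableSingletonClass β] [MeasurableSpace γ] {A : Ω → β} {V : Ω → γ}
    (hAV : IndepFun A V μ) (hA : Measurable A) {a₀ a₁ : β}
    (ha₀ : μ.real {ω | A ω = a₀} ≠ 0) (ha₁ : μ.real {ω | A ω = a₁} ≠ 0) {φ₀ φ₁ : γ → ℝ}
    (hφ₀ : Measurable φ₀) (hφ₁ : Measurable φ₁) (hφ₀V : Integrable (fun ω => φ₀ (V ω)) μ)
    (hφ₁V : Integrable (fun ω => φ₁ (V ω)) μ) {X : Ω → ℝ}
    (hX₀ : ∀ ω, A ω = a₀ → X ω = φ₀ (V ω)) (hX₁ : ∀ ω, A ω = a₁ → X ω = φ₁ (V ω)) :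
    condExpEvent μ X {ω | A ω = a₁} - condExpEvent μ X {ω | A ω = a₀} =
      ∫ ω, φ₁ (V ω) - φ₀ (V ω) ∂μ := by
  have h₁ : condExpEvent μ X {ω | A ω = a₁} = ∫ ω, φ₁ (V ω) ∂μ :=
    condExpEvent_preimage_eq_integral (hAV.comp measurable_id hφ₁) hA hφ₁V.1
      (measurableSet_singleton a₁) ha₁ hX₁
  have h₀ : condExpEvent μ X {ω | A ω = a₀} = ∫ ω, φ₀ (V ω) ∂μ :=
    condExpEvent_preimage_eq_integral (hAV.comp measurable_id hφ₀) hA hφ₀V.1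
      (measurableSet_singleton a₀) ha₀ hX₀
  rw [h₁, h₀, integral_sub hφ₁V hφ₀V]

lemma integrable_mul_add_one_sub_mul {Z Y₀ Y₁ : Ω → ℝ} (hZ : AEStronglyMeasurable Z μ)
    (hZ01 : ∀ᵐ ω ∂μ, Z ω ∈ Set.Icc 0 1) (hY₀ : Integrable Y₀ μ) (hY₁ : Integrable Y₁ μ) :
    Integrable (fun ω => Z ω * Y₁ ω + (1 - Z ω) * Y₀ ω) μ := by
  refine (hY₁.bdd_mul hZ (c := 1) ?_).add
    (hY₀.bdd_mul (aestronglyMeasurable_const.sub hZ) (c := 1) ?_)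
  all_goals
    filter_upwards [hZ01] with ω ⟨h0, h1⟩
    rw [Real.norm_eq_abs, abs_le]
    constructor <;> linarith

end

theorem stmt_6_general {Ω : Type*} [MeasurableSpace Ω] (μ : Measure Ω) [IsProbabilityMeasure μ]
    (A Z₀ Z₁ Y₀ Y₁ : Ω → ℝ)
    (hA : Measurable A) (hZ₀ : Measurable Z₀) (hZ₁ : Measurable Z₁)
    (hY₀ : Integrable Y₀ μ) (hY₁ : Integrable Y₁ μ)
    (hAbin : ∀ ω, A ω = 0 ∨ A ω = 1)
    (hbZ₀ : ∀ ω, Z₀ ω = 0 ∨ Z₀ ω = 1) (hbZ₁ : ∀ ω, Z₁ ω = 0 ∨ Z₁ ω = 1)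
    (hp : 0 < (μ {ω | A ω = 1}).toReal ∧ (μ {ω | A ω = 1}).toReal < 1)
    (hindep : IndepFun A (fun ω => (Y₀ ω, Y₁ ω, Z₀ ω, Z₁ ω)) μ)
    (hmono : ∀ᵐ ω ∂μ, Z₀ ω ≤ Z₁ ω)
    (Z Y : Ω → ℝ)
    (hZ : Z = fun ω => A ω * Z₁ ω + (1 - A ω) * Z₀ ω)
    (hY : Y = fun ω => Z ω * Y₁ ω + (1 - Z ω) * Y₀ ω) :
    condExpEvent μ Y {ω | A ω = 1} - condExpEvent μ Y {ω | A ω = 0} =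
      ∫ ω, (Y₁ ω - Y₀ ω) * (Z₁ ω - Z₀ ω) ∂μ ∧
    (condExpEvent μ Y {ω | A ω = 1} - condExpEvent μ Y {ω | A ω = 0}) /
        (condExpEvent μ Z {ω | A ω = 1} - condExpEvent μ Z {ω | A ω = 0}) =
      condExpEvent μ (fun ω => Y₁ ω - Y₀ ω) {ω | Z₁ ω - Z₀ ω = 1} := by
  have hp₁ : μ.real {ω | A ω = 1} ≠ 0 := hp.1.ne'
  have hp₀ : μ.real {ω | A ω = 0} ≠ 0 := by
    have hs₁ : MeasurableSet {ω | A ω = 1} := hA (measurableSet_singleton 1)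
    have : {ω | A ω = 0} = {ω | A ω = 1}ᶜ := by
      ext ω; rcases hAbin ω with h | h <;> simp [h]
    rw [this, probReal_compl_eq_one_sub hs₁]
    exact sub_ne_zero.2 hp.2.ne'
  have hIcc {D : Ω → ℝ} (hD : ∀ ω, D ω = 0 ∨ D ω = 1) : ∀ᵐ ω ∂μ, D ω ∈ Set.Icc 0 1 :=
    .of_forall fun ω => by rcases hD ω with h | h <;> simp [h]
  have hg₁ := integrable_mul_add_one_sub_mul hZ₁.aestronglyMeasurable (hIcc hbZ₁) hY₀ hY₁
  have hg₀ := integrable_mul_add_one_sub_mul hZ₀.aestronglyMeasurable (hIcc hbZ₀) hY₀ hY₁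
  have hZ₁i : Integrable Z₁ μ := .of_bound hZ₁.aestronglyMeasurable 1
    (.of_forall fun ω => by rcases hbZ₁ ω with h | h <;> simp [h])
  have hZ₀i : Integrable Z₀ μ := .of_bound hZ₀.aestronglyMeasurable 1
    (.of_forall fun ω => by rcases hbZ₀ ω with h | h <;> simp [h])
  have hwald : condExpEvent μ Y {ω | A ω = 1} - condExpEvent μ Y {ω | A ω = 0} =
      ∫ ω, (Y₁ ω - Y₀ ω) * (Z₁ ω - Z₀ ω) ∂μ := by
    rw [condExpEvent_sub_condExpEvent_eq_integral_sub hindep hA hp₀ hp₁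
      (φ₀ := fun v => v.2.2.1 * v.2.1 + (1 - v.2.2.1) * v.1)
      (φ₁ := fun v => v.2.2.2 * v.2.1 + (1 - v.2.2.2) * v.1) (by fun_prop) (by fun_prop) hg₀ hg₁
      (fun ω hω => by simp [hY, hZ, hω]) (fun ω hω => by simp [hY, hZ, hω])]
    congr 1 with ω
    ring
  have hfirst : condExpEvent μ Z {ω | A ω = 1} - condExpEvent μ Z {ω | A ω = 0} =
      ∫ ω, Z₁ ω - Z₀ ω ∂μ :=
    condExpEvent_sub_condExpEvent_eq_integral_sub hindep hA hp₀ hp₁ (φ₀ := fun v => v.2.2.1)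
      (φ₁ := fun v => v.2.2.2) (by fun_prop) (by fun_prop) hZ₀i hZ₁i
      (fun ω hω => by simp [hZ, hω]) (fun ω hω => by simp [hZ, hω])
  have hcompliers : ∀ᵐ ω ∂μ, Z₁ ω - Z₀ ω = 0 ∨ Z₁ ω - Z₀ ω = 1 := by
    filter_upwards [hmono] with ω h
    rcases hbZ₀ ω with h₀ | h₀ <;> rcases hbZ₁ ω with h₁ | h₁ <;> grind
  refine ⟨hwald, ?_⟩
  rw [hwald, hfirst]
  exact (condExpEvent_eq_integral_mul_div_integral (hZ₁.sub hZ₀) hcompliers).symm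

theorem stmt_6 {Ω : Type*} [MeasurableSpace Ω] (μ : Measure Ω) [IsProbabilityMeasure μ]
    (A Z₀ Z₁ Y₀ Y₁ : Ω → ℝ)
    (hA : Measurable A) (hZ₀ : Measurable Z₀) (hZ₁ : Measurable Z₁)
    (hY₀m : Measurable Y₀) (hY₁m : Measurable Y₁)
    (hY₀ : Integrable Y₀ μ) (hY₁ : Integrable Y₁ μ)
    (hAbin : ∀ ω, A ω = 0 ∨ A ω = 1)
    (hbZ₀ : ∀ ω, Z₀ ω = 0 ∨ Z₀ ω = 1) (hbZ₁ : ∀ ω, Z₁ ω = 0 ∨ Z₁ ω = 1)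
    (hp : 0 < (μ {ω | A ω = 1}).toReal ∧ (μ {ω | A ω = 1}).toReal < 1)
    (hindep : IndepFun A (fun ω => (Y₀ ω, Y₁ ω, Z₀ ω, Z₁ ω)) μ)
    (hmono : ∀ᵐ ω ∂μ, Z₀ ω ≤ Z₁ ω)
    (hFS : (∫ ω, (Z₁ ω - Z₀ ω) ∂μ) ≠ 0)
    (Z Y : Ω → ℝ)
    (hZ : Z = fun ω => A ω * Z₁ ω + (1 - A ω) * Z₀ ω)
    (hY : Y = fun ω => Z ω * Y₁ ω + (1 - Z ω) * Y₀ ω) :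
    condExpEvent μ Y {ω | A ω = 1} - condExpEvent μ Y {ω | A ω = 0} =
      ∫ ω, (Y₁ ω - Y₀ ω) * (Z₁ ω - Z₀ ω) ∂μ ∧
    (condExpEvent μ Y {ω | A ω = 1} - condExpEvent μ Y {ω | A ω = 0}) /
        (condExpEvent μ Z {ω | A ω = 1} - condExpEvent μ Z {ω | A ω = 0}) =
      condExpEvent μ (fun ω => Y₁ ω - Y₀ ω) {ω | Z₁ ω - Z₀ ω = 1} :=
  stmt_6_general μ A Z₀ Z₁ Y₀ Y₁ hA hZ₀ hZ₁ hY₀ hY₁ hAbin hbZ₀ hbZ₁ hp hindep hmono Z Y hZ hY
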